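/- Let I ⊂ ℝ be a closed bounded interval, let n be a positive natural number, and let V be a real normed vector space. Let (H_s)_{s ∈ I} be a family of injective linear maps from ℝⁿ to V such that for every y ∈ ℝⁿ the map s ↦ H_s y is continuous on I (i.e., for every s ∈ I and y ∈ ℝⁿ, H_t y → H_s y as t → s within I). Then there exist constants 0 < a ≤ b < ∞ such that for all s ∈ I and all y ∈ ℝⁿ, a‖y‖ ≤ ‖H_s y‖ ≤ b‖y‖. -/

import Mathlib

/-!
Pointwise continuity of a family of linear maps on a finite-dimensional space is continuity in
operator norm, so `‖H_s‖` is bounded on the compact interval `I`, and `(s, y) ↦ ‖H_s y‖` is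
continuous on the compact set `I × S`, where `S` is the unit sphere. By injectivity it is positive
there, hence bounded below by some `a > 0`, and homogeneity extends this bound from `S` to `ℝⁿ`.
-/

open Set Metric

section

variable {E V T : Type*} [NormedAddCommGroup E] [NormedSpace ℝ E]
  [NormedAddCommGroup V] [NormedSpace ℝ V] [TopologicalSpace T]

theorem LinearMap.mul_norm_le_norm_of_forall_mem_sphere (f : E →ₗ[ℝ] V) {a : ℝ}
    (h : ∀ y ∈ sphere (0 : E) 1, a ≤ ‖f y‖) (y : E) : a * ‖y‖ ≤ ‖f y‖ := by
  rcases eq_or_ne y 0 with rfl | hy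
  · simp
  have hy' : 0 < ‖y‖ := norm_pos_iff.mpr hy
  have hunit : ‖y‖⁻¹ • y ∈ sphere (0 : E) 1 := by
    rw [mem_sphere_zero_iff_norm, norm_smul, norm_inv, norm_norm, inv_mul_cancel₀ hy'.ne']
  calc a * ‖y‖ ≤ ‖f (‖y‖⁻¹ • y)‖ * ‖y‖ := mul_le_mul_of_nonneg_right (h _ hunit) hy'.le
    _ = ‖f y‖ := by
      rw [map_smul, norm_smul, norm_inv, norm_norm, mul_right_comm, inv_mul_cancel₀ hy'.ne', one_mul]

theorem IsCompact.exists_pos_mul_norm_le_of_continuousOn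
    [FiniteDimensional ℝ E] {K : Set T} (hK : IsCompact K) {H : T → E →L[ℝ] V}
    (hH : ContinuousOn H K) (hinj : ∀ s ∈ K, Function.Injective (H s)) :
    ∃ a > 0, ∀ s ∈ K, ∀ y, a * ‖y‖ ≤ ‖H s y‖ := by
  have hcompact : IsCompact (K ×ˢ sphere (0 : E) 1) := hK.prod (isCompact_sphere 0 1)
  have hcont : ContinuousOn (fun p : T × E => ‖H p.1 p.2‖) (K ×ˢ sphere (0 : E) 1) :=
    ((hH.comp continuousOn_fst fun _ hp => hp.1).clm_apply continuousOn_snd).norm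
  have hpos : ∀ p ∈ K ×ˢ sphere (0 : E) 1, 0 < ‖H p.1 p.2‖ := by
    rintro ⟨s, y⟩ ⟨hs, hy⟩
    refine norm_pos_iff.mpr fun h0 => ne_zero_of_mem_unit_sphere ⟨y, hy⟩ ?_
    exact (injective_iff_map_eq_zero (H s)).mp (hinj s hs) y h0
  obtain ⟨a, ha, hbound⟩ := hcompact.exists_forall_le' hcont hpos
  exact ⟨a, ha, fun s hs => (H s : E →ₗ[ℝ] V).mul_norm_le_norm_of_forall_mem_sphere
    fun y hy => hbound (s, y) ⟨hs, hy⟩⟩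

theorem IsCompact.exists_norm_apply_le_of_continuousOn {K : Set T} (hK : IsCompact K)
    {H : T → E →L[ℝ] V} (hH : ContinuousOn H K) :
    ∃ b, ∀ s ∈ K, ∀ y, ‖H s y‖ ≤ b * ‖y‖ := by
  obtain ⟨b, hb⟩ := hK.exists_bound_of_continuousOn hH
  exact ⟨b, fun s hs y => (H s).le_of_opNorm_le (hb s hs) y⟩

end

theorem uniform_bounds_of_continuous_injective_family_general
    {n : ℕ} {V : Type*} [NormedAddCommGroup V] [NormedSpace ℝ V]
    (c d : ℝ) (H : ℝ → EuclideanSpace ℝ (Fin n) →ₗ[ℝ] V)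
    (hinj : ∀ s ∈ Set.Icc c d, Function.Injective (H s))
    (hcont : ∀ y : EuclideanSpace ℝ (Fin n),
      ContinuousOn (fun s => H s y) (Set.Icc c d)) :
    ∃ a b : ℝ, 0 < a ∧ a ≤ b ∧
      ∀ s ∈ Set.Icc c d, ∀ y : EuclideanSpace ℝ (Fin n),
        a * ‖y‖ ≤ ‖H s y‖ ∧ ‖H s y‖ ≤ b * ‖y‖ := by
  let H' : ℝ → EuclideanSpace ℝ (Fin n) →L[ℝ] V := fun s => (H s).toContinuousLinearMap
  have hH' : ContinuousOn H' (Icc c d) := continuousOn_clm_apply.mpr hcont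
  obtain ⟨a, ha, hlower⟩ := isCompact_Icc.exists_pos_mul_norm_le_of_continuousOn hH' hinj
  obtain ⟨b, hupper⟩ := isCompact_Icc.exists_norm_apply_le_of_continuousOn hH'
  refine ⟨a, max a b, ha, le_max_left a b, fun s hs y => ⟨hlower s hs y, ?_⟩⟩
  exact (hupper s hs y).trans (by gcongr; exact le_max_right a b)

/-- Lemma 5.5 of the paper: a pointwise-continuous family of injective linear maps
from `ℝⁿ` into a normed space `V`, indexed by a closed bounded interval `I = [c, d]`,
is uniformly bounded above and below: there are constants `0 < a ≤ b` with
`a‖y‖ ≤ ‖H_s y‖ ≤ b‖y‖` for all `s ∈ I` and `y ∈ ℝⁿ`. -/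
theorem uniform_bounds_of_continuous_injective_family
    {n : ℕ} (hn : 0 < n) {V : Type*} [NormedAddCommGroup V] [NormedSpace ℝ V]
    (c d : ℝ) (H : ℝ → EuclideanSpace ℝ (Fin n) →ₗ[ℝ] V)
    (hinj : ∀ s ∈ Set.Icc c d, Function.Injective (H s))
    (hcont : ∀ y : EuclideanSpace ℝ (Fin n),
      ContinuousOn (fun s => H s y) (Set.Icc c d)) :
    ∃ a b : ℝ, 0 < a ∧ a ≤ b ∧
      ∀ s ∈ Set.Icc c d, ∀ y : EuclideanSpace ℝ (Fin n),
        a * ‖y‖ ≤ ‖H s y‖ ∧ ‖H s y‖ ≤ b * ‖y‖ :=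
  uniform_bounds_of_continuous_injective_family_general c d H hinj hcont
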